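/- The minimum classical extension of IA₁ + FT₁ is IA₁ + FT₁ + GDK: IA₁ + FT₁ + GDK proves the negative translation (FT₁)^g, and GDK is provable in IA₁ + (FT₁)^g. -/

import Mathlib

/-!
A deep embedding of the two-sorted language of intuitionistic analysis
(Kleene-Vesley), with number variables and one-place function (choice
sequence) variables, finitely many constants for primitive recursive
function(al)s (successor, +, ·, truncated subtraction ∸, pairing ⟨·,·⟩,
finite-sequence coding: concatenation *, singleton code ⟨s⟩, empty code ⟨⟩,
length lh, the Seq predicate, Kleene's T-predicate and U-function, and the
course-of-values functional ᾱ(x)), λ-abstraction with λ-reduction,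
intuitionistic two-sorted predicate logic, the Gödel–Gentzen negative
translation g, and the axiom schemas of the paper
"Calibrating the negative interpretation" (J.R. Moschovakis).
-/

namespace NegInterp

/-! Terms (type 0) and functors (type 1). -/
mutual
inductive Term : Type
  | var   : ℕ → Term
  | zero  : Term
  | succ  : Term → Term
  | add   : Term → Term → Term
  | mul   : Term → Term → Term
  | sub   : Term → Term → Term           -- truncated subtraction
  | pair  : Term → Term → Term           -- ⟨s,t⟩
  | cat   : Term → Term → Term           -- concatenation w ∗ v of sequence codes
  | sing  : Term → Term                  -- ⟨s⟩
  | empt  : Term                         -- ⟨ ⟩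
  | lh    : Term → Term                  -- length of a sequence code
  | seqc  : Term → Term                  -- characteristic function of Seq
  | kT    : Term → Term → Term → Term    -- characteristic function of Kleene's T
  | kU    : Term → Term                  -- Kleene's result-extraction U
  | app   : Func → Term → Term           -- φ(t)
  | bar   : Func → Term → Term           -- ᾱ(t), the code of (α(0),…,α(t−1))
inductive Func : Type
  | fvar : ℕ → Func
  | lam  : ℕ → Term → Func               -- λx.t
end

open Term Func

/-- Coding of finite sequences of naturals by naturals (every natural is a code). -/
def listCode (l : List ℕ) : ℕ := Encodable.encode l
def listDec (n : ℕ) : List ℕ := Denumerable.ofNat (List ℕ) n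

/-- Kleene's T-predicate: y codes a (fuel, value) pair witnessing that the
machine with code e halts on input x with the given value. -/
def KTmeta (e x y : ℕ) : Prop :=
  Nat.Partrec.Code.evaln y.unpair.1 (Denumerable.ofNat Nat.Partrec.Code e) x = some y.unpair.2

instance (e x y : ℕ) : Decidable (KTmeta e x y) := by unfold KTmeta; infer_instance

/-! Standard (full classical ω-model) interpretation of terms and functors,
used only to state the defining axioms of the primitive recursive constants. -/
mutual
def evalT (ρ : ℕ → ℕ) (σ : ℕ → ℕ → ℕ) : Term → ℕ
  | .var n => ρ n
  | .zero => 0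
  | .succ t => evalT ρ σ t + 1
  | .add s t => evalT ρ σ s + evalT ρ σ t
  | .mul s t => evalT ρ σ s * evalT ρ σ t
  | .sub s t => evalT ρ σ s - evalT ρ σ t
  | .pair s t => Nat.pair (evalT ρ σ s) (evalT ρ σ t)
  | .cat s t => listCode (listDec (evalT ρ σ s) ++ listDec (evalT ρ σ t))
  | .sing t => listCode [evalT ρ σ t]
  | .empt => listCode []
  | .lh t => (listDec (evalT ρ σ t)).length
  | .seqc _ => 0      -- under this coding every number codes a finite sequence
  | .kT e x y => if KTmeta (evalT ρ σ e) (evalT ρ σ x) (evalT ρ σ y) then 0 else 1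
  | .kU y => (Nat.unpair (evalT ρ σ y)).2
  | .app φ t => evalF ρ σ φ (evalT ρ σ t)
  | .bar φ t => listCode ((List.range (evalT ρ σ t)).map (evalF ρ σ φ))
def evalF (ρ : ℕ → ℕ) (σ : ℕ → ℕ → ℕ) : Func → ℕ → ℕ
  | .fvar n => σ n
  | .lam x t => fun m => evalT (Function.update ρ x m) σ t
end

/-! Free number variables of a term / functor. -/
mutual
def tFN : Term → Set ℕ
  | .var n => {n}
  | .zero => ∅
  | .empt => ∅
  | .succ t => tFN t
  | .sing t => tFN t
  | .lh t => tFN t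
  | .seqc t => tFN t
  | .kU t => tFN t
  | .add s t => tFN s ∪ tFN t
  | .mul s t => tFN s ∪ tFN t
  | .sub s t => tFN s ∪ tFN t
  | .pair s t => tFN s ∪ tFN t
  | .cat s t => tFN s ∪ tFN t
  | .kT e x y => tFN e ∪ tFN x ∪ tFN y
  | .app φ t => fFN φ ∪ tFN t
  | .bar φ t => fFN φ ∪ tFN t
def fFN : Func → Set ℕ
  | .fvar _ => ∅
  | .lam x t => tFN t \ {x}
end

/-! Free function variables of a term / functor. -/
mutual
def tFF : Term → Set ℕ
  | .var _ => ∅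
  | .zero => ∅
  | .empt => ∅
  | .succ t => tFF t
  | .sing t => tFF t
  | .lh t => tFF t
  | .seqc t => tFF t
  | .kU t => tFF t
  | .add s t => tFF s ∪ tFF t
  | .mul s t => tFF s ∪ tFF t
  | .sub s t => tFF s ∪ tFF t
  | .pair s t => tFF s ∪ tFF t
  | .cat s t => tFF s ∪ tFF t
  | .kT e x y => tFF e ∪ tFF x ∪ tFF y
  | .app φ t => fFF φ ∪ tFF t
  | .bar φ t => fFF φ ∪ tFF t
def fFF : Func → Set ℕ
  | .fvar a => {a}
  | .lam _ t => tFF t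
end

/-! Substitution of a term for a number variable in terms / functors. -/
mutual
def tSubN (n : ℕ) (u : Term) : Term → Term
  | .var m => if m = n then u else .var m
  | .zero => .zero
  | .empt => .empt
  | .succ t => .succ (tSubN n u t)
  | .sing t => .sing (tSubN n u t)
  | .lh t => .lh (tSubN n u t)
  | .seqc t => .seqc (tSubN n u t)
  | .kU t => .kU (tSubN n u t)
  | .add s t => .add (tSubN n u s) (tSubN n u t)
  | .mul s t => .mul (tSubN n u s) (tSubN n u t)
  | .sub s t => .sub (tSubN n u s) (tSubN n u t)
  | .pair s t => .pair (tSubN n u s) (tSubN n u t)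
  | .cat s t => .cat (tSubN n u s) (tSubN n u t)
  | .kT e x y => .kT (tSubN n u e) (tSubN n u x) (tSubN n u y)
  | .app φ t => .app (fSubN n u φ) (tSubN n u t)
  | .bar φ t => .bar (fSubN n u φ) (tSubN n u t)
def fSubN (n : ℕ) (u : Term) : Func → Func
  | .fvar a => .fvar a
  | .lam x t => if x = n then .lam x t else .lam x (tSubN n u t)
end

/-! Substitution of a functor for a function variable in terms / functors. -/
mutual
def tSubF (a : ℕ) (ψ : Func) : Term → Term
  | .var m => .var m
  | .zero => .zero
  | .empt => .empt
  | .succ t => .succ (tSubF a ψ t)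
  | .sing t => .sing (tSubF a ψ t)
  | .lh t => .lh (tSubF a ψ t)
  | .seqc t => .seqc (tSubF a ψ t)
  | .kU t => .kU (tSubF a ψ t)
  | .add s t => .add (tSubF a ψ s) (tSubF a ψ t)
  | .mul s t => .mul (tSubF a ψ s) (tSubF a ψ t)
  | .sub s t => .sub (tSubF a ψ s) (tSubF a ψ t)
  | .pair s t => .pair (tSubF a ψ s) (tSubF a ψ t)
  | .cat s t => .cat (tSubF a ψ s) (tSubF a ψ t)
  | .kT e x y => .kT (tSubF a ψ e) (tSubF a ψ x) (tSubF a ψ y)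
  | .app φ t => .app (fSubF a ψ φ) (tSubF a ψ t)
  | .bar φ t => .bar (fSubF a ψ φ) (tSubF a ψ t)
def fSubF (a : ℕ) (ψ : Func) : Func → Func
  | .fvar b => if b = a then ψ else .fvar b
  | .lam x t => .lam x (tSubF a ψ t)
end

/-! "u is free for (the number variable) n" in a term/functor
(no free occurrence of n lies within a λ binding a variable free in u). -/
mutual
def tFForN (u : Term) (n : ℕ) : Term → Prop
  | .var _ => True
  | .zero => True
  | .empt => True
  | .succ t => tFForN u n t
  | .sing t => tFForN u n t
  | .lh t => tFForN u n t
  | .seqc t => tFForN u n t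
  | .kU t => tFForN u n t
  | .add s t => tFForN u n s ∧ tFForN u n t
  | .mul s t => tFForN u n s ∧ tFForN u n t
  | .sub s t => tFForN u n s ∧ tFForN u n t
  | .pair s t => tFForN u n s ∧ tFForN u n t
  | .cat s t => tFForN u n s ∧ tFForN u n t
  | .kT e x y => tFForN u n e ∧ tFForN u n x ∧ tFForN u n y
  | .app φ t => fFForN u n φ ∧ tFForN u n t
  | .bar φ t => fFForN u n φ ∧ tFForN u n t
def fFForN (u : Term) (n : ℕ) : Func → Prop
  | .fvar _ => True
  | .lam x t => x = n ∨ n ∉ tFN t ∨ (x ∉ tFN u ∧ tFForN u n t)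
end

/-! "ψ is free for (the function variable) a" in a term/functor. -/
mutual
def tFForF (ψ : Func) (a : ℕ) : Term → Prop
  | .var _ => True
  | .zero => True
  | .empt => True
  | .succ t => tFForF ψ a t
  | .sing t => tFForF ψ a t
  | .lh t => tFForF ψ a t
  | .seqc t => tFForF ψ a t
  | .kU t => tFForF ψ a t
  | .add s t => tFForF ψ a s ∧ tFForF ψ a t
  | .mul s t => tFForF ψ a s ∧ tFForF ψ a t
  | .sub s t => tFForF ψ a s ∧ tFForF ψ a t
  | .pair s t => tFForF ψ a s ∧ tFForF ψ a t
  | .cat s t => tFForF ψ a s ∧ tFForF ψ a t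
  | .kT e x y => tFForF ψ a e ∧ tFForF ψ a x ∧ tFForF ψ a y
  | .app φ t => fFForF ψ a φ ∧ tFForF ψ a t
  | .bar φ t => fFForF ψ a φ ∧ tFForF ψ a t
def fFForF (ψ : Func) (a : ℕ) : Func → Prop
  | .fvar _ => True
  | .lam x t => a ∉ tFF t ∨ (x ∉ fFN ψ ∧ tFForF ψ a t)
end

/-- Formulas of the two-sorted language; prime formulas are equations between
terms of type 0 (equality of type 1 is defined extensionally). -/
inductive Formula : Type
  | eq     : Term → Term → Formula
  | falsum : Formula
  | and    : Formula → Formula → Formula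
  | or     : Formula → Formula → Formula
  | imp    : Formula → Formula → Formula
  | allN   : ℕ → Formula → Formula
  | exN    : ℕ → Formula → Formula
  | allF   : ℕ → Formula → Formula
  | exF    : ℕ → Formula → Formula

namespace Formula

/-- ¬A -/
def neg (A : Formula) : Formula := A.imp .falsum
/-- ¬¬A -/
def nneg (A : Formula) : Formula := neg (neg A)
/-- A ↔ B -/
def iff (A B : Formula) : Formula := (A.imp B).and (B.imp A)

end Formula

open Formula

/-- s ≤ t, expressed by the primitive recursive constant ∸. -/
def tle (s t : Term) : Formula := .eq (Term.sub s t) Term.zero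
/-- s < t -/
def tlt (s t : Term) : Formula := tle (Term.succ s) t
/-- Seq(w) : w codes a finite sequence. -/
def seqF (t : Term) : Formula := .eq (Term.seqc t) Term.zero

/-- Free number variables of a formula. -/
def freeN : Formula → Set ℕ
  | .eq s t => tFN s ∪ tFN t
  | .falsum => ∅
  | .and A B => freeN A ∪ freeN B
  | .or A B => freeN A ∪ freeN B
  | .imp A B => freeN A ∪ freeN B
  | .allN x A => freeN A \ {x}
  | .exN x A => freeN A \ {x}
  | .allF _ A => freeN A
  | .exF _ A => freeN A

/-- Free function variables of a formula. -/
def freeF : Formula → Set ℕ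
  | .eq s t => tFF s ∪ tFF t
  | .falsum => ∅
  | .and A B => freeF A ∪ freeF B
  | .or A B => freeF A ∪ freeF B
  | .imp A B => freeF A ∪ freeF B
  | .allN _ A => freeF A
  | .exN _ A => freeF A
  | .allF a A => freeF A \ {a}
  | .exF a A => freeF A \ {a}

/-- Substitution A[u/n] of a term u for the number variable n. -/
def subN (n : ℕ) (u : Term) : Formula → Formula
  | .eq s t => .eq (tSubN n u s) (tSubN n u t)
  | .falsum => .falsum
  | .and A B => .and (subN n u A) (subN n u B)
  | .or A B => .or (subN n u A) (subN n u B)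
  | .imp A B => .imp (subN n u A) (subN n u B)
  | .allN x A => if x = n then .allN x A else .allN x (subN n u A)
  | .exN x A => if x = n then .exN x A else .exN x (subN n u A)
  | .allF a A => .allF a (subN n u A)
  | .exF a A => .exF a (subN n u A)

/-- Substitution A[ψ/a] of a functor ψ for the function variable a. -/
def subF (a : ℕ) (ψ : Func) : Formula → Formula
  | .eq s t => .eq (tSubF a ψ s) (tSubF a ψ t)
  | .falsum => .falsum
  | .and A B => .and (subF a ψ A) (subF a ψ B)
  | .or A B => .or (subF a ψ A) (subF a ψ B)
  | .imp A B => .imp (subF a ψ A) (subF a ψ B)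
  | .allN x A => .allN x (subF a ψ A)
  | .exN x A => .exN x (subF a ψ A)
  | .allF b A => if b = a then .allF b A else .allF b (subF a ψ A)
  | .exF b A => if b = a then .exF b A else .exF b (subF a ψ A)

/-- "The term u is free for the number variable n in A". -/
def FreeForN (u : Term) (n : ℕ) : Formula → Prop
  | .eq s t => tFForN u n s ∧ tFForN u n t
  | .falsum => True
  | .and A B => FreeForN u n A ∧ FreeForN u n B
  | .or A B => FreeForN u n A ∧ FreeForN u n B
  | .imp A B => FreeForN u n A ∧ FreeForN u n B
  | .allN m A => m = n ∨ n ∉ freeN A ∨ (m ∉ tFN u ∧ FreeForN u n A)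
  | .exN m A => m = n ∨ n ∉ freeN A ∨ (m ∉ tFN u ∧ FreeForN u n A)
  | .allF b A => n ∉ freeN A ∨ (b ∉ tFF u ∧ FreeForN u n A)
  | .exF b A => n ∉ freeN A ∨ (b ∉ tFF u ∧ FreeForN u n A)

/-- "The functor ψ is free for the function variable a in A". -/
def FreeForF (ψ : Func) (a : ℕ) : Formula → Prop
  | .eq s t => tFForF ψ a s ∧ tFForF ψ a t
  | .falsum => True
  | .and A B => FreeForF ψ a A ∧ FreeForF ψ a B
  | .or A B => FreeForF ψ a A ∧ FreeForF ψ a B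
  | .imp A B => FreeForF ψ a A ∧ FreeForF ψ a B
  | .allN m A => a ∉ freeF A ∨ (m ∉ fFN ψ ∧ FreeForF ψ a A)
  | .exN m A => a ∉ freeF A ∨ (m ∉ fFN ψ ∧ FreeForF ψ a A)
  | .allF b A => b = a ∨ a ∉ freeF A ∨ (b ∉ fFF ψ ∧ FreeForF ψ a A)
  | .exF b A => b = a ∨ a ∉ freeF A ∨ (b ∉ fFF ψ ∧ FreeForF ψ a A)

/-- Derivability from a set of (mathematical) axioms by two-sorted
intuitionistic predicate logic with equality at type 0 as sole prime relation;
a Hilbert-style system with modus ponens and generalization. -/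
inductive Prov (T : Set Formula) : Formula → Prop
  | ax {A : Formula} (h : A ∈ T) : Prov T A
  | k {A B : Formula} : Prov T (A.imp (B.imp A))
  | s {A B C : Formula} : Prov T ((A.imp (B.imp C)).imp ((A.imp B).imp (A.imp C)))
  | andI {A B : Formula} : Prov T (A.imp (B.imp (A.and B)))
  | andE1 {A B : Formula} : Prov T ((A.and B).imp A)
  | andE2 {A B : Formula} : Prov T ((A.and B).imp B)
  | orI1 {A B : Formula} : Prov T (A.imp (A.or B))
  | orI2 {A B : Formula} : Prov T (B.imp (A.or B))
  | orE {A B C : Formula} : Prov T ((A.imp C).imp ((B.imp C).imp ((A.or B).imp C)))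
  | exfalso {A : Formula} : Prov T (Formula.falsum.imp A)
  | mp {A B : Formula} : Prov T (A.imp B) → Prov T A → Prov T B
  | allNE {n : ℕ} {A : Formula} {u : Term} (h : FreeForN u n A) :
      Prov T ((Formula.allN n A).imp (subN n u A))
  | allNI {n : ℕ} {A B : Formula} (h : n ∉ freeN A) :
      Prov T (A.imp B) → Prov T (A.imp (Formula.allN n B))
  | exNI {n : ℕ} {A : Formula} {u : Term} (h : FreeForN u n A) :
      Prov T ((subN n u A).imp (Formula.exN n A))
  | exNE {n : ℕ} {A B : Formula} (h : n ∉ freeN B) :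
      Prov T (A.imp B) → Prov T ((Formula.exN n A).imp B)
  | allFE {a : ℕ} {A : Formula} {ψ : Func} (h : FreeForF ψ a A) :
      Prov T ((Formula.allF a A).imp (subF a ψ A))
  | allFI {a : ℕ} {A B : Formula} (h : a ∉ freeF A) :
      Prov T (A.imp B) → Prov T (A.imp (Formula.allF a B))
  | exFI {a : ℕ} {A : Formula} {ψ : Func} (h : FreeForF ψ a A) :
      Prov T ((subF a ψ A).imp (Formula.exF a A))
  | exFE {a : ℕ} {A B : Formula} (h : a ∉ freeF B) :
      Prov T (A.imp B) → Prov T ((Formula.exF a A).imp B)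
  | genN {n : ℕ} {A : Formula} : Prov T A → Prov T (Formula.allN n A)
  | genF {a : ℕ} {A : Formula} : Prov T A → Prov T (Formula.allF a A)

/-- Two systems (sets of axioms over the same language) have the same theorems. -/
def SameTheory (T₁ T₂ : Set Formula) : Prop := ∀ A, Prov T₁ A ↔ Prov T₂ A

/-- T₁ is a subsystem of T₂: every theorem of T₁ is a theorem of T₂. -/
def Subsystem (T₁ T₂ : Set Formula) : Prop := ∀ A, Prov T₁ A → Prov T₂ A

/-- The Gödel–Gentzen negative translation: hereditarily replace A∨B by
¬(¬A & ¬B) and ∃A by ¬∀¬A (prime formulas, being equations between terms of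
type 0, are their own translations). -/
def gTrans : Formula → Formula
  | .eq s t => .eq s t
  | .falsum => .falsum
  | .and A B => .and (gTrans A) (gTrans B)
  | .or A B => Formula.neg ((Formula.neg (gTrans A)).and (Formula.neg (gTrans B)))
  | .imp A B => .imp (gTrans A) (gTrans B)
  | .allN x A => .allN x (gTrans A)
  | .exN x A => Formula.neg (.allN x (Formula.neg (gTrans A)))
  | .allF a A => .allF a (gTrans A)
  | .exF a A => Formula.neg (.allF a (Formula.neg (gTrans A)))

/-! ### The base system IA₁ -/

/-- Universally valid equations: the defining axioms of the finitely many
primitive recursive constants of the language (all equations true in the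
intended interpretation under every assignment). -/
def validEq : Set Formula :=
  {F | ∃ s t : Term, F = Formula.eq s t ∧ ∀ ρ σ, evalT ρ σ s = evalT ρ σ t}

/-- Leibniz equality schema (includes the open equality axiom
∀x∀y(x=y → α(x)=α(y))). -/
def eqAx : Set Formula :=
  {F | ∃ (n : ℕ) (s t : Term) (A : Formula),
    FreeForN s n A ∧ FreeForN t n A ∧
    F = (Formula.eq s t).imp ((subN n s A).imp (subN n t A))}

/-- Successor axioms. -/
def sucAx : Set Formula :=
  {F | ∃ s t : Term, F = (Formula.eq (Term.succ s) (Term.succ t)).imp (.eq s t)} ∪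
  {F | ∃ t : Term, F = Formula.neg (.eq (Term.succ t) Term.zero)}

/-- Mathematical induction, for all formulas of the two-sorted language. -/
def indAx : Set Formula :=
  {F | ∃ (x : ℕ) (A : Formula),
    F = ((subN x Term.zero A).and
          (Formula.allN x (A.imp (subN x (Term.succ (Term.var x)) A)))).imp
        (Formula.allN x A)}

/-- λ-reduction: (λx.t)(s) = t[s/x], for s free for x in t. -/
def lamAx : Set Formula :=
  {F | ∃ (x : ℕ) (t s : Term), tFForN s x t ∧
    F = Formula.eq (Term.app (Func.lam x t) s) (tSubN x s t)}

/-- IA₁: two-sorted intuitionistic arithmetic. -/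
def IA1 : Set Formula := validEq ∪ eqAx ∪ sucAx ∪ indAx ∪ lamAx

/-- The double negation schema ¬¬A → A of classical logic. -/
def DNE : Set Formula := {F | ∃ A : Formula, F = (Formula.nneg A).imp A}

/-- The Gödel–Gentzen negative translations of all theorems of S + (¬¬A→A). -/
def gThms (S : Set Formula) : Set Formula :=
  {F | ∃ A : Formula, Prov (S ∪ DNE) A ∧ F = gTrans A}

/-- The minimum classical extension S^{+g} of S: the least extension of S
proving the negative translation of every theorem of S + (¬¬A→A). -/
def minClassExt (S : Set Formula) : Set Formula := S ∪ gThms S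

/-! ### Classes of formulas -/

/-- "Quantifier-free" formulas: no function quantifiers and only bounded
number quantifiers. -/
inductive IsQF : Formula → Prop
  | eq (s t : Term) : IsQF (.eq s t)
  | falsum : IsQF .falsum
  | and {A B} : IsQF A → IsQF B → IsQF (A.and B)
  | or {A B} : IsQF A → IsQF B → IsQF (A.or B)
  | imp {A B} : IsQF A → IsQF B → IsQF (A.imp B)
  | ballN {x t A} (h : x ∉ tFN t) (hA : IsQF A) :
      IsQF (.allN x ((tle (Term.var x) t).imp A))
  | bexN {x t A} (h : x ∉ tFN t) (hA : IsQF A) :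
      IsQF (.exN x ((tle (Term.var x) t).and A))

/-- Arithmetical formulas: no function quantifiers (function parameters allowed). -/
def IsArith : Formula → Prop
  | .eq _ _ => True
  | .falsum => True
  | .and A B => IsArith A ∧ IsArith B
  | .or A B => IsArith A ∧ IsArith B
  | .imp A B => IsArith A ∧ IsArith B
  | .allN _ A => IsArith A
  | .exN _ A => IsArith A
  | .allF _ _ => False
  | .exF _ _ => False

/-- Negative formulas: containing neither ∨ nor ∃. -/
def IsNeg : Formula → Prop
  | .eq _ _ => True
  | .falsum => True
  | .and A B => IsNeg A ∧ IsNeg B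
  | .or _ _ => False
  | .imp A B => IsNeg A ∧ IsNeg B
  | .allN _ A => IsNeg A
  | .exN _ _ => False
  | .allF _ A => IsNeg A
  | .exF _ _ => False

/-! ### The axiom schemas -/

/-- An instance of countable choice AC₀₀ : ∀x∃yA(x,y) → ∃α∀xA(x,α(x)). -/
def ac00Inst (x y a : ℕ) (A : Formula) : Formula :=
  (Formula.allN x (.exN y A)).imp
    (.exF a (.allN x (subN y (Term.app (Func.fvar a) (Term.var x)) A)))

def ac00Side (x y a : ℕ) (A : Formula) : Prop :=
  x ≠ y ∧ a ∉ freeF A ∧ FreeForN (Term.app (Func.fvar a) (Term.var x)) y A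

/-- AC₀₀ (full countable choice for numbers). -/
def AC00 : Set Formula :=
  {F | ∃ x y a A, ac00Side x y a A ∧ F = ac00Inst x y a A}

/-- qf-AC₀₀. -/
def qfAC00 : Set Formula :=
  {F | ∃ x y a A, IsQF A ∧ ac00Side x y a A ∧ F = ac00Inst x y a A}

/-- AC^Ar₀₀ (arithmetical countable choice). -/
def arAC00 : Set Formula :=
  {F | ∃ x y a A, IsArith A ∧ ac00Side x y a A ∧ F = ac00Inst x y a A}

/-- ∃!y A, rendered as ∃yA & ∀y∀z(A & A[z/y] → y = z). -/
def exUnique (y z : ℕ) (A : Formula) : Formula :=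
  (Formula.exN y A).and
    (.allN y (.allN z ((A.and (subN y (Term.var z) A)).imp
      (.eq (Term.var y) (Term.var z)))))

/-- AC₀₀! (countable comprehension): ∀x∃!yA(x,y) → ∃α∀xA(x,α(x)). -/
def AC00u : Set Formula :=
  {F | ∃ x y z a A, z ≠ y ∧ z ∉ freeN A ∧ FreeForN (Term.var z) y A ∧
    ac00Side x y a A ∧
    F = (Formula.allN x (exUnique y z A)).imp
          (.exF a (.allN x (subN y (Term.app (Func.fvar a) (Term.var x)) A)))}

/-- AC₀₁ : ∀x∃αA(x,α) → ∃β∀xA(x,λy.β(⟨x,y⟩)). -/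
def AC01 : Set Formula :=
  {F | ∃ (x a b y : ℕ) (A : Formula), b ∉ freeF A ∧ b ≠ a ∧ y ≠ x ∧
    FreeForF (Func.lam y (Term.app (Func.fvar b)
      (Term.pair (Term.var x) (Term.var y)))) a A ∧
    F = (Formula.allN x (.exF a A)).imp
          (.exF b (.allN x (subF a (Func.lam y (Term.app (Func.fvar b)
            (Term.pair (Term.var x) (Term.var y)))) A)))}

/-- CF_d : ∀x(A(x) ∨ ¬A(x)) → ∃α∀x[α(x)≤1 & (α(x)=0 ↔ A(x))]. -/
def CFd : Set Formula :=
  {F | ∃ (x a : ℕ) (A : Formula), a ∉ freeF A ∧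
    F = (Formula.allN x (A.or (Formula.neg A))).imp
          (.exF a (.allN x ((tle (Term.app (Func.fvar a) (Term.var x))
              (Term.succ Term.zero)).and
            (Formula.iff (.eq (Term.app (Func.fvar a) (Term.var x)) Term.zero) A))))}

/-- WCF₀⁻ : ¬¬∃ζ∀x(ζ(x)=0 ↔ A(x)) for negative A. -/
def WCF0neg : Set Formula :=
  {F | ∃ (x z : ℕ) (A : Formula), IsNeg A ∧ z ∉ freeF A ∧
    F = Formula.nneg (.exF z (.allN x
      (Formula.iff (.eq (Term.app (Func.fvar z) (Term.var x)) Term.zero) A)))}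

/-- Markov's Principle MP₁ : ∀α(¬∀x¬α(x)=0 → ∃x α(x)=0). -/
def MP1 : Formula :=
  .allF 0 ((Formula.neg (.allN 0 (Formula.neg
      (.eq (Term.app (Func.fvar 0) (Term.var 0)) Term.zero)))).imp
    (.exN 0 (.eq (Term.app (Func.fvar 0) (Term.var 0)) Term.zero)))

/-- Σ⁰₁-DNS₀ : ∀α[∀x¬¬∃y α(⟨x,y⟩)=0 → ¬¬∀x∃y α(⟨x,y⟩)=0]. -/
def Sigma01DNS0 : Formula :=
  .allF 0 ((Formula.allN 0 (Formula.nneg (.exN 1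
      (.eq (Term.app (Func.fvar 0) (Term.pair (Term.var 0) (Term.var 1))) Term.zero)))).imp
    (Formula.nneg (.allN 0 (.exN 1
      (.eq (Term.app (Func.fvar 0) (Term.pair (Term.var 0) (Term.var 1))) Term.zero)))))

/-- DNS₁ : ∀ρ[∀α¬¬∃x ρ(ᾱ(x))=0 → ¬¬∀α∃x ρ(ᾱ(x))=0]. -/
def DNS1 : Formula :=
  .allF 0 ((Formula.allF 1 (Formula.nneg (.exN 0
      (.eq (Term.app (Func.fvar 0) (Term.bar (Func.fvar 1) (Term.var 0))) Term.zero)))).imp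
    (Formula.nneg (.allF 1 (.exN 0
      (.eq (Term.app (Func.fvar 0) (Term.bar (Func.fvar 1) (Term.var 0))) Term.zero)))))

/-- B(α) : α is a binary sequence, ∀x α(x) ≤ 1. -/
def binF (a x : ℕ) : Formula :=
  .allN x (tle (Term.app (Func.fvar a) (Term.var x)) (Term.succ Term.zero))

/-- GDK : ∀ρ[∀α_{B(α)}¬¬∃x ρ(ᾱ(x))=0 → ¬¬∀α_{B(α)}∃x ρ(ᾱ(x))=0]. -/
def GDK : Formula :=
  .allF 0 ((Formula.allF 1 ((binF 1 1).imp (Formula.nneg (.exN 0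
      (.eq (Term.app (Func.fvar 0) (Term.bar (Func.fvar 1) (Term.var 0))) Term.zero))))).imp
    (Formula.nneg (.allF 1 ((binF 1 1).imp (.exN 0
      (.eq (Term.app (Func.fvar 0) (Term.bar (Func.fvar 1) (Term.var 0))) Term.zero))))))

/-- FT₁ (the fan theorem):
∀ρ[∀α_{B(α)}∃x ρ(ᾱ(x))=0 → ∃n∀α_{B(α)}∃x≤n ρ(ᾱ(x))=0]. -/
def FT1 : Formula :=
  .allF 0 ((Formula.allF 1 ((binF 1 1).imp (.exN 0
      (.eq (Term.app (Func.fvar 0) (Term.bar (Func.fvar 1) (Term.var 0))) Term.zero)))).imp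
    (.exN 2 (.allF 1 ((binF 1 1).imp (.exN 0 ((tle (Term.var 0) (Term.var 2)).and
      (.eq (Term.app (Func.fvar 0) (Term.bar (Func.fvar 1) (Term.var 0))) Term.zero)))))))

/-- An instance of bar induction BI₁ with bar ρ (function variable r) and
inductive predicate A(w). -/
def biInst (r aa xv w s : ℕ) (A : Formula) : Formula :=
  ((Formula.allF aa (.exN xv (.eq
      (Term.app (Func.fvar r) (Term.bar (Func.fvar aa) (Term.var xv))) Term.zero))).and
    ((Formula.allN w (((seqF (Term.var w)).and
        (.eq (Term.app (Func.fvar r) (Term.var w)) Term.zero)).imp A)).and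
      (Formula.allN w (((seqF (Term.var w)).and
        (.allN s (subN w (Term.cat (Term.var w)
          (Term.sing (Term.succ (Term.var s)))) A))).imp A)))).imp
  (subN w Term.empt A)

/-- BI₁ (bar induction, Kleene's ˣ26.3b). -/
def BI1 : Set Formula :=
  {F | ∃ r aa xv w s A, aa ≠ r ∧ aa ∉ freeF A ∧ s ≠ w ∧ s ∉ freeN A ∧
    FreeForN (Term.cat (Term.var w) (Term.sing (Term.succ (Term.var s)))) w A ∧
    F = biInst r aa xv w s A}

/-- Π⁰₁-WCF₀ : ∀α¬¬∃ζ∀x(ζ(x)=0 ↔ ∀y α(⟨x,y⟩)=0). -/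
def Pi01WCF0 : Formula :=
  .allF 0 (Formula.nneg (.exF 1 (.allN 0
    (Formula.iff (.eq (Term.app (Func.fvar 1) (Term.var 0)) Term.zero)
      (.allN 1 (.eq (Term.app (Func.fvar 0)
        (Term.pair (Term.var 0) (Term.var 1))) Term.zero))))))

/-- Π¹₁-WCF₀ : ∀γ¬¬∃ζ∀x(ζ(x)=0 ↔ ∀α∃y γ(ᾱ(⟨x,y⟩))=0). -/
def Pi11WCF0 : Formula :=
  .allF 0 (Formula.nneg (.exF 1 (.allN 0
    (Formula.iff (.eq (Term.app (Func.fvar 1) (Term.var 0)) Term.zero)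
      (.allF 2 (.exN 1 (.eq (Term.app (Func.fvar 0)
        (Term.bar (Func.fvar 2) (Term.pair (Term.var 0) (Term.var 1)))) Term.zero)))))))

/-- T(e,x,y) as a formula. -/
def TFml (e x y : Term) : Formula := .eq (Term.kT e x y) Term.zero

/-- GR(φ): "φ is general recursive",
∃e[∀x∃yT(e,x,y) & ∀x∀y(T(e,x,y) → U(y)=φ(x))]. -/
def GRof (φ : Func) : Formula :=
  .exN 0 ((Formula.allN 1 (.exN 2 (TFml (Term.var 0) (Term.var 1) (Term.var 2)))).and
    (.allN 1 (.allN 2 ((TFml (Term.var 0) (Term.var 1) (Term.var 2)).imp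
      (.eq (Term.kU (Term.var 2)) (Term.app φ (Term.var 1)))))))

/-- Church's Thesis CT₁ : ∀α GR(α). -/
def CT1 : Formula := .allF 0 (GRof (Func.fvar 0))

/-- ∀α¬¬GR(α). -/
def nnGR : Formula := .allF 0 (Formula.nneg (GRof (Func.fvar 0)))

/-- {τ}[α](x) = y in Kleene's sense: τ(⟨x⟩∗ᾱ(y)) > 0 with minimal y,
used to state continuous choice. -/
def ccApp (t a x y : ℕ) : Formula :=
  .eq (Term.app (Func.fvar t)
    (Term.cat (Term.sing (Term.var x)) (Term.bar (Func.fvar a) (Term.var y)))) Term.zero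

/-- An instance of Kleene's strong continuous choice CC₁₁ (Brouwer's principle
for functions, ˣ27.1): ∀α∃βA(α,β) → ∃τ∀α[{τ}[α] is completely defined &
∀β({τ}[α] = β → A(α,β))]. -/
def cc11Inst (a b t x y z : ℕ) (A : Formula) : Formula :=
  (Formula.allF a (.exF b A)).imp
    (.exF t (.allF a
      ((Formula.allN x (.exN y (Formula.neg (ccApp t a x y)))).and
        (.allF b ((Formula.allN x (.exN y
          ((Formula.eq (Term.app (Func.fvar t) (Term.cat (Term.sing (Term.var x))
              (Term.bar (Func.fvar a) (Term.var y))))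
            (Term.succ (Term.app (Func.fvar b) (Term.var x)))).and
           (.allN z ((tlt (Term.var z) (Term.var y)).imp (ccApp t a x z)))))).imp A)))))

/-- CC₁₁ as a schema. -/
def CC11 : Set Formula :=
  {F | ∃ a b t x y z A, t ∉ freeF A ∧ t ≠ a ∧ t ≠ b ∧ a ≠ b ∧
    x ∉ freeN A ∧ y ∉ freeN A ∧ z ∉ freeN A ∧
    x ≠ y ∧ y ≠ z ∧ x ≠ z ∧
    F = cc11Inst a b t x y z A}

/-! ### The systems -/

/-- Intuitionistic recursive analysis IRA = IA₁ + qf-AC₀₀. -/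
def IRA : Set Formula := IA1 ∪ qfAC00

/-- Kleene's basic system B = IA₁ + AC₀₁ + BI₁. -/
def Bsys : Set Formula := IA1 ∪ AC01 ∪ BI1

/-- Markov's recursive analysis MRA = IRA + CT₁ + MP₁. -/
def MRA : Set Formula := IRA ∪ {CT1, MP1}

/-- The subsystems of B considered in Theorem 5.1. -/
def theoremSystems : List (Set Formula) :=
  [IA1, IRA, IA1 ∪ arAC00, IA1 ∪ AC00u, IA1 ∪ AC00, IA1 ∪ AC01,
   IA1 ∪ {FT1}, IRA ∪ {FT1}, IRA ∪ BI1, IA1 ∪ AC00 ∪ BI1, Bsys]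

end NegInterp


/-!
IA₁ proves the negative translation of each of its own axioms, and the negative translation of
every theorem of classical logic is stable (¬¬A^g → A^g). Hence every extension of IA₁ proving
(FT₁)^g proves the negative translations of all theorems of IA₁ + FT₁ + (¬¬A → A), and the
theorem comes down to deriving (FT₁)^g and GDK from each other over IA₁ + FT₁.

(FT₁)^g from FT₁ + GDK: the hypothesis ∀α_B ¬∀x ¬ρ(ᾱ(x))=0 of (FT₁)^g is equivalent to that of
GDK, so GDK gives ¬¬ of the hypothesis of FT₁, hence ¬¬ of its conclusion; that conclusion implies
its own negative translation, which is stable.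

GDK from (FT₁)^g: the hypothesis of GDK yields that of (FT₁)^g, hence ¬∀n ¬∀α_B ¬∀x ¬(x ≤ n &
ρ(ᾱ(x))=0). Since ρ(ᾱ(x))=0 is decidable, a bounded search (an induction on n) turns
¬∀x ¬(x ≤ n & ρ(ᾱ(x))=0) into ∃x ρ(ᾱ(x))=0, which gives ¬¬∀α_B ∃x ρ(ᾱ(x))=0.
-/

namespace NegInterp

open Formula

namespace Prov

variable {T : Set Formula} {A B C : Formula}

theorem imp_self : Prov T (A.imp A) := mp (mp (s (B := A.imp A)) k) k

theorem imp_trans (h₁ : Prov T (A.imp B)) (h₂ : Prov T (B.imp C)) : Prov T (A.imp C) :=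
  mp (mp s (mp k h₂)) h₁

theorem imp_imp_imp (h : Prov T (B.imp C)) : Prov T ((A.imp B).imp (A.imp C)) :=
  mp s (mp k h)

theorem of_prov_axioms {T₁ T₂ : Set Formula} (hax : ∀ A ∈ T₁, Prov T₂ A) (h : Prov T₁ B) :
    Prov T₂ B := by
  induction h with
  | ax h => exact hax _ h
  | mp _ _ ih₁ ih₂ => exact mp ih₁ ih₂
  | allNI h _ ih => exact allNI h ih
  | exNE h _ ih => exact exNE h ih
  | allFI h _ ih => exact allFI h ih
  | exFE h _ ih => exact exFE h ih
  | genN _ ih => exact genN ih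
  | genF _ ih => exact genF ih
  | k => exact k
  | s => exact s
  | andI => exact andI
  | andE1 => exact andE1
  | andE2 => exact andE2
  | orI1 => exact orI1
  | orI2 => exact orI2
  | orE => exact orE
  | exfalso => exact exfalso
  | allNE h => exact allNE h
  | exNI h => exact exNI h
  | allFE h => exact allFE h
  | exFI h => exact exFI h

end Prov

/-! ### Derivations from hypotheses -/

def impList : List Formula → Formula → Formula
  | [], A => A
  | B :: Γ, A => B.imp (impList Γ A)

theorem impList_append (Γ : List Formula) (A B : Formula) :
    impList (Γ ++ [A]) B = impList Γ (A.imp B) := by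
  induction Γ with
  | nil => rfl
  | cons C Δ ih => simp [impList, ih]

def Derives (T : Set Formula) (Γ : List Formula) (A : Formula) : Prop := Prov T (impList Γ A)

theorem Prov.imp_impList {T : Set Formula} {A : Formula} (Γ : List Formula) :
    Prov T (A.imp (impList Γ A)) := by
  induction Γ with
  | nil => exact imp_self
  | cons C Δ ih => exact imp_trans ih k

theorem Prov.impList_mp {T : Set Formula} {A B : Formula} (Γ : List Formula) :
    Prov T ((impList Γ (A.imp B)).imp ((impList Γ A).imp (impList Γ B))) := by
  induction Γ with
  | nil => exact imp_self
  | cons C Δ ih => exact imp_trans (imp_imp_imp ih) s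

namespace Derives

variable {T : Set Formula} {Γ : List Formula} {A B C : Formula}

theorem of_prov (h : Prov T A) : Derives T Γ A := Prov.mp (Prov.imp_impList Γ) h

theorem ax (h : A ∈ T) : Derives T Γ A := of_prov (Prov.ax h)

theorem mp (h₁ : Derives T Γ (A.imp B)) (h₂ : Derives T Γ A) : Derives T Γ B :=
  Prov.mp (Prov.mp (Prov.impList_mp Γ) h₁) h₂

theorem hyp (h : A ∈ Γ) : Derives T Γ A := by
  induction Γ with
  | nil => simp at h
  | cons C Δ ih =>
    rcases List.mem_cons.1 h with rfl | h
    · exact Prov.imp_impList Δ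
    · exact Prov.mp Prov.k (ih h)

theorem self : Derives T [A] A := Prov.imp_self

theorem last : Derives T (Γ ++ [A]) A := hyp (by simp)

theorem intro (h : Derives T (Γ ++ [A]) B) : Derives T Γ (A.imp B) := by
  rwa [Derives, impList_append] at h

theorem weaken (h : Derives T Γ A) : Derives T (Γ ++ [B]) A := by
  rw [Derives, impList_append]
  exact mp (of_prov Prov.k) h

theorem andI (h₁ : Derives T Γ A) (h₂ : Derives T Γ B) : Derives T Γ (A.and B) :=
  mp (mp (of_prov Prov.andI) h₁) h₂

theorem andE1 (h : Derives T Γ (A.and B)) : Derives T Γ A := mp (of_prov Prov.andE1) h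

theorem andE2 (h : Derives T Γ (A.and B)) : Derives T Γ B := mp (of_prov Prov.andE2) h

theorem orI1 (h : Derives T Γ A) : Derives T Γ (A.or B) := mp (of_prov Prov.orI1) h

theorem orI2 (h : Derives T Γ B) : Derives T Γ (A.or B) := mp (of_prov Prov.orI2) h

theorem orE (h : Derives T Γ (A.or B)) (h₁ : Derives T (Γ ++ [A]) C)
    (h₂ : Derives T (Γ ++ [B]) C) : Derives T Γ C :=
  mp (mp (mp (of_prov Prov.orE) (intro h₁)) (intro h₂)) h

theorem exfalso (h : Derives T Γ falsum) : Derives T Γ A := mp (of_prov Prov.exfalso) h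

theorem nnegI (h : Derives T Γ A) : Derives T Γ (nneg A) :=
  intro (mp (hyp (A := neg A) (by simp)) h.weaken)

theorem nneg_mono (hAB : Prov T (A.imp B)) (h : Derives T Γ (nneg A)) : Derives T Γ (nneg B) :=
  intro (mp h.weaken (intro (mp (hyp (A := neg B) (by simp)) (mp (of_prov hAB) last))))

theorem nneg_of_nneg_imp (h : Derives T Γ (nneg (A.imp B))) (hA : Derives T Γ A) :
    Derives T Γ (nneg B) :=
  intro (mp h.weaken (intro (mp (hyp (A := neg B) (by simp)) (mp last hA.weaken.weaken))))

theorem neg_of_nneg_neg (h : Derives T Γ (nneg (neg A))) : Derives T Γ (neg A) :=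
  intro (mp h.weaken (nnegI last))

end Derives

/-! ### Substitution and quantifier rules -/

theorem tSubN_var_self (n : ℕ) (t : Term) : tSubN n (.var n) t = t := by
  induction t using Term.rec (motive_2 := fun φ => fSubN n (.var n) φ = φ) <;>
    simp_all [tSubN, fSubN]

theorem tSubN_of_not_mem {n : ℕ} (u : Term) {t : Term} : n ∉ tFN t → tSubN n u t = t := by
  induction t using Term.rec (motive_2 := fun φ => n ∉ fFN φ → fSubN n u φ = φ) <;>
    simp_all [tSubN, fSubN, tFN, fFN] <;> grind

theorem tFForN_var_self (n : ℕ) (t : Term) : tFForN (.var n) n t := by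
  induction t using Term.rec (motive_2 := fun φ => fFForN (.var n) n φ) <;>
    simp_all [tFForN, fFForN, tFN]
  tauto

theorem tFForN_of_not_mem {n : ℕ} (u : Term) {t : Term} : n ∉ tFN t → tFForN u n t := by
  induction t using Term.rec (motive_2 := fun φ => n ∉ fFN φ → fFForN u n φ) <;>
    simp_all [tFForN, fFForN, tFN, fFN]
  tauto

theorem tSubF_fvar_self (a : ℕ) (t : Term) : tSubF a (.fvar a) t = t := by
  induction t using Term.rec (motive_2 := fun φ => fSubF a (.fvar a) φ = φ) <;>
    simp_all [tSubF, fSubF]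

theorem tFForF_fvar_self (a : ℕ) (t : Term) : tFForF (.fvar a) a t := by
  induction t using Term.rec (motive_2 := fun φ => fFForF (.fvar a) a φ) <;>
    simp_all [tFForF, fFForF, fFN]

theorem tFN_finite (t : Term) : (tFN t).Finite := by
  induction t using Term.rec (motive_2 := fun φ => (fFN φ).Finite) <;> simp_all [tFN, fFN]

theorem exists_not_mem_tFN (t : Term) : ∃ n, n ∉ tFN t :=
  (tFN_finite t).infinite_compl.nonempty

theorem subN_var_self (n : ℕ) (A : Formula) : subN n (.var n) A = A := by
  induction A <;> simp_all [subN, tSubN_var_self]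

theorem FreeForN_var_self (n : ℕ) (A : Formula) : FreeForN (.var n) n A := by
  induction A <;> simp_all [FreeForN, tFForN_var_self, tFN] <;> tauto

theorem subF_fvar_self (a : ℕ) (A : Formula) : subF a (.fvar a) A = A := by
  induction A <;> simp_all [subF, tSubF_fvar_self]

theorem FreeForF_fvar_self (a : ℕ) (A : Formula) : FreeForF (.fvar a) a A := by
  induction A <;> simp_all [FreeForF, tFForF_fvar_self, fFF] <;> tauto

namespace Prov

variable {T : Set Formula} {A B C : Formula}

theorem allNE_self {n : ℕ} : Prov T ((allN n A).imp A) := by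
  simpa [subN_var_self] using allNE (T := T) (FreeForN_var_self n A)

theorem allFE_self {a : ℕ} : Prov T ((allF a A).imp A) := by
  simpa [subF_fvar_self] using allFE (T := T) (FreeForF_fvar_self a A)

theorem exNI_self {n : ℕ} : Prov T (A.imp (exN n A)) := by
  simpa [subN_var_self] using exNI (T := T) (FreeForN_var_self n A)

theorem allN_imp_imp {n : ℕ} (h : n ∉ freeN C) :
    Prov T ((allN n (C.imp A)).imp (C.imp (allN n A))) := by
  set W := allN n (C.imp A)
  have hW : Derives T [W.and C] (W.and C) := Derives.self
  have hA : Derives T [W.and C] A :=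
    Derives.mp (Derives.mp (Derives.of_prov allNE_self) hW.andE1) hW.andE2
  show Derives T [W, C] (allN n A)
  exact Derives.mp (Derives.of_prov (allNI (by simp [W, freeN, h]) hA))
    (Derives.andI (Derives.hyp (by simp)) (Derives.hyp (by simp)))

theorem allF_imp_imp {a : ℕ} (h : a ∉ freeF C) :
    Prov T ((allF a (C.imp A)).imp (C.imp (allF a A))) := by
  set W := allF a (C.imp A)
  have hW : Derives T [W.and C] (W.and C) := Derives.self
  have hA : Derives T [W.and C] A :=
    Derives.mp (Derives.mp (Derives.of_prov allFE_self) hW.andE1) hW.andE2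
  show Derives T [W, C] (allF a A)
  exact Derives.mp (Derives.of_prov (allFI (by simp [W, freeF, h]) hA))
    (Derives.andI (Derives.hyp (by simp)) (Derives.hyp (by simp)))

theorem allN_impList {n : ℕ} : ∀ Γ : List Formula, (∀ C ∈ Γ, n ∉ freeN C) →
    Prov T ((allN n (impList Γ A)).imp (impList Γ (allN n A)))
  | [], _ => imp_self
  | C :: Γ, h => imp_trans (allN_imp_imp (h C (by simp)))
      (imp_imp_imp (allN_impList Γ fun D hD => h D (by simp [hD])))

theorem allF_impList {a : ℕ} : ∀ Γ : List Formula, (∀ C ∈ Γ, a ∉ freeF C) →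
    Prov T ((allF a (impList Γ A)).imp (impList Γ (allF a A)))
  | [], _ => imp_self
  | C :: Γ, h => imp_trans (allF_imp_imp (h C (by simp)))
      (imp_imp_imp (allF_impList Γ fun D hD => h D (by simp [hD])))

theorem allN_imp_exN_imp {n : ℕ} (h : n ∉ freeN B) :
    Prov T ((allN n (A.imp B)).imp ((exN n A).imp B)) := by
  set W := allN n (A.imp B)
  have hB : Derives T [A, W] B :=
    Derives.mp (Derives.mp (Derives.of_prov allNE_self) (Derives.hyp (A := W) (by simp)))
      (Derives.hyp (by simp))
  show Derives T [W, exN n A] B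
  exact Derives.mp (Derives.mp (Derives.of_prov (exNE (n := n) (by simp [W, freeN, h]) hB))
    (Derives.hyp (by simp))) (Derives.hyp (by simp))

theorem exN_mono {n : ℕ} (h : Prov T (A.imp B)) : Prov T ((exN n A).imp (exN n B)) :=
  exNE (by simp [freeN]) (imp_trans h exNI_self)

theorem allF_mono {a : ℕ} (h : Prov T (A.imp B)) : Prov T ((allF a A).imp (allF a B)) :=
  allFI (by simp [freeF]) (imp_trans allFE_self h)

end Prov

namespace Derives

variable {T : Set Formula} {Γ : List Formula} {A B : Formula}

theorem genN {n : ℕ} (hΓ : ∀ C ∈ Γ, n ∉ freeN C) (h : Derives T Γ A) :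
    Derives T Γ (allN n A) :=
  Prov.mp (Prov.allN_impList Γ hΓ) (Prov.genN h)

theorem genF {a : ℕ} (hΓ : ∀ C ∈ Γ, a ∉ freeF C) (h : Derives T Γ A) :
    Derives T Γ (allF a A) :=
  Prov.mp (Prov.allF_impList Γ hΓ) (Prov.genF h)

theorem allNE {n : ℕ} {u : Term} (hu : FreeForN u n A) (h : Derives T Γ (allN n A)) :
    Derives T Γ (subN n u A) :=
  mp (of_prov (Prov.allNE hu)) h

theorem allFE {a : ℕ} {ψ : Func} (hψ : FreeForF ψ a A) (h : Derives T Γ (allF a A)) :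
    Derives T Γ (subF a ψ A) :=
  mp (of_prov (Prov.allFE hψ)) h

theorem specN {n : ℕ} (h : Derives T Γ (allN n A)) : Derives T Γ A :=
  mp (of_prov Prov.allNE_self) h

theorem exNI {n : ℕ} {u : Term} (hu : FreeForN u n A) (h : Derives T Γ (subN n u A)) :
    Derives T Γ (exN n A) :=
  mp (of_prov (Prov.exNI hu)) h

theorem exNI_self {n : ℕ} (h : Derives T Γ A) : Derives T Γ (exN n A) :=
  mp (of_prov Prov.exNI_self) h

theorem exNE {n : ℕ} (hB : n ∉ freeN B) (hΓ : ∀ C ∈ Γ, n ∉ freeN C)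
    (h : Derives T Γ (exN n A)) (h' : Derives T (Γ ++ [A]) B) : Derives T Γ B :=
  mp (mp (of_prov (Prov.allN_imp_exN_imp hB)) (genN hΓ (intro h'))) h

end Derives

/-! ### Equality and arithmetic in IA₁ -/

def ifEq (s t a b : Term) : Term :=
  let d := Term.add (.sub s t) (.sub t s)
  .add (.mul a (.sub (.succ .zero) d)) (.mul b (.sub (.succ .zero) (.sub (.succ .zero) d)))

theorem evalT_ifEq (ρ : ℕ → ℕ) (σ : ℕ → ℕ → ℕ) (s t a b : Term) :
    evalT ρ σ (ifEq s t a b) =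
      if evalT ρ σ s = evalT ρ σ t then evalT ρ σ a else evalT ρ σ b := by
  simp only [ifEq, evalT]
  split_ifs <;> grind

theorem Prov.induction {T : Set Formula} (hT : IA1 ⊆ T) {x : ℕ} {A : Formula}
    (h₀ : Prov T (subN x .zero A)) (hS : Prov T (allN x (A.imp (subN x (.succ (.var x)) A)))) :
    Prov T (allN x A) :=
  mp (ax (hT (Or.inl (Or.inr ⟨x, A, rfl⟩)))) (mp (mp andI h₀) hS)

namespace Derives

variable {T : Set Formula} {Γ : List Formula} {A : Formula}

theorem eq_of_valid (hT : IA1 ⊆ T) {s t : Term} (h : ∀ ρ σ, evalT ρ σ s = evalT ρ σ t) :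
    Derives T Γ (.eq s t) :=
  ax (hT (Or.inl (Or.inl (Or.inl (Or.inl ⟨s, t, rfl, h⟩)))))

theorem subst (hT : IA1 ⊆ T) {n : ℕ} {s t : Term} (hs : FreeForN s n A) (ht : FreeForN t n A)
    (heq : Derives T Γ (.eq s t)) (h : Derives T Γ (subN n s A)) : Derives T Γ (subN n t A) :=
  mp (mp (ax (hT (Or.inl (Or.inl (Or.inl (Or.inr ⟨n, s, t, A, hs, ht, rfl⟩)))))) heq) h

theorem eq_trans (hT : IA1 ⊆ T) {s t u : Term} (h₁ : Derives T Γ (.eq s t))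
    (h₂ : Derives T Γ (.eq t u)) : Derives T Γ (.eq s u) := by
  obtain ⟨n, hn⟩ := exists_not_mem_tFN s
  have key := subst (A := .eq s (.var n)) hT
    ⟨tFForN_of_not_mem t hn, trivial⟩ ⟨tFForN_of_not_mem u hn, trivial⟩ h₂
  simpa [subN, tSubN, tSubN_of_not_mem _ hn] using
    key (by simpa [subN, tSubN, tSubN_of_not_mem _ hn])

/-- Since every equation true in the standard model is an axiom of IA₁, Leibniz's law applied to
`s' = (if x = t then t' else s')` at `x := s` and `x := t` turns `s = t` into `s' = t'`. -/
theorem eq_of_valid_imp (hT : IA1 ⊆ T) {s t s' t' : Term} (h : Derives T Γ (.eq s t))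
    (hv : ∀ ρ σ, evalT ρ σ s = evalT ρ σ t → evalT ρ σ s' = evalT ρ σ t') :
    Derives T Γ (.eq s' t') := by
  obtain ⟨n, hn⟩ := exists_not_mem_tFN (.pair (.pair t s') t')
  simp only [tFN, Set.mem_union, not_or] at hn
  obtain ⟨⟨ht, hs'⟩, ht'⟩ := hn
  set A : Formula := .eq s' (ifEq (.var n) t t' s')
  have hA (u : Term) : FreeForN u n A := by
    simp [A, FreeForN, ifEq, tFForN, tFForN_of_not_mem u ht, tFForN_of_not_mem u hs',
      tFForN_of_not_mem u ht']
  have hsub (u : Term) : subN n u A = .eq s' (ifEq u t t' s') := by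
    simp [A, subN, ifEq, tSubN, tSubN_of_not_mem u ht, tSubN_of_not_mem u hs',
      tSubN_of_not_mem u ht']
  have hs : Derives T Γ (.eq s' (ifEq s t t' s')) := eq_of_valid hT fun ρ σ => by
    rw [evalT_ifEq]
    split_ifs with hst
    exacts [hv ρ σ hst, rfl]
  have htt := subst hT (hA s) (hA t) h (by rwa [hsub])
  rw [hsub] at htt
  exact eq_trans hT htt (eq_of_valid hT fun ρ σ => by simp [evalT_ifEq])

/-- Two equations are packed into one equation between pairs. -/
theorem eq_of_valid_imp₂ (hT : IA1 ⊆ T) {s₁ t₁ s₂ t₂ s t : Term}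
    (h₁ : Derives T Γ (.eq s₁ t₁)) (h₂ : Derives T Γ (.eq s₂ t₂))
    (hv : ∀ ρ σ, evalT ρ σ s₁ = evalT ρ σ t₁ → evalT ρ σ s₂ = evalT ρ σ t₂ →
      evalT ρ σ s = evalT ρ σ t) :
    Derives T Γ (.eq s t) := by
  have h : Derives T Γ (.eq (.pair s₁ s₂) (.pair t₁ t₂)) :=
    eq_trans hT (eq_of_valid_imp hT h₁ (t' := .pair t₁ s₂) fun ρ σ h => by simp [evalT, h])
      (eq_of_valid_imp hT h₂ fun ρ σ h => by simp [evalT, h])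
  refine eq_of_valid_imp hT h fun ρ σ h => ?_
  simp only [evalT, Nat.pair_eq_pair] at h
  exact hv ρ σ h.1 h.2

theorem false_of_eq (hT : IA1 ⊆ T) {s t : Term} (h : Derives T Γ (.eq s t))
    (hv : ∀ ρ σ, evalT ρ σ s ≠ evalT ρ σ t) : Derives T Γ falsum :=
  mp (ax (hT (Or.inl (Or.inl (Or.inr (Or.inr ⟨.zero, rfl⟩))))))
    (eq_of_valid_imp hT h (s' := .succ .zero) (t' := .zero) fun ρ σ h' => absurd h' (hv ρ σ))

theorem eq_zero_or_eq_succ (hT : IA1 ⊆ T) (u : Term) :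
    Derives T Γ ((Formula.eq u .zero).or (.eq u (.succ (.sub u (.succ .zero))))) := by
  set A : Formula :=
    (Formula.eq (.var 0) .zero).or (.eq (.var 0) (.succ (.sub (.var 0) (.succ .zero))))
  have h₀ : Derives T [] (subN 0 .zero A) := by
    simpa [A, subN, tSubN] using orI1 (eq_of_valid hT fun _ _ => rfl)
  have hS : Derives T [A] (subN 0 (.succ (.var 0)) A) := by
    simpa [A, subN, tSubN] using orI2 (eq_of_valid hT fun _ _ => by simp [evalT])
  have hu : FreeForN u 0 A := by simp [A, FreeForN, tFForN]
  simpa [A, subN, tSubN] using (of_prov (Prov.induction hT h₀ (Prov.genN hS))).allNE hu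

theorem eq_zero_or_neg (hT : IA1 ⊆ T) (u : Term) :
    Derives T Γ ((Formula.eq u .zero).or (neg (.eq u .zero))) :=
  orE (eq_zero_or_eq_succ hT u) (orI1 last) (orI2 (intro (false_of_eq hT
    (eq_of_valid_imp₂ hT last.weaken last (s := .succ (.sub u (.succ .zero))) (t := .zero)
      fun _ _ h₁ h₂ => h₁ ▸ h₂)
    fun _ _ => Nat.succ_ne_zero _)))

theorem eq_of_nneg (hT : IA1 ⊆ T) {s t : Term} (h : Derives T Γ (nneg (.eq s t))) :
    Derives T Γ (.eq s t) := by
  set d := Term.add (.sub s t) (.sub t s)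
  refine orE (eq_zero_or_neg hT d)
    (eq_of_valid_imp hT last fun ρ σ h => by simp only [d, evalT] at h; omega)
    (exfalso (mp h.weaken (intro ?_)))
  exact mp last.weaken (eq_of_valid_imp hT last fun ρ σ h => by simp [d, evalT, h])

theorem le_or_eq_succ_of_le_succ (hT : IA1 ⊆ T) {u v : Term}
    (h : Derives T Γ (tle u (.succ v))) : Derives T Γ ((tle u v).or (.eq u (.succ v))) :=
  orE (eq_zero_or_eq_succ hT (.sub u v)) (orI1 last)
    (orI2 (eq_of_valid_imp₂ hT h.weaken last
      fun ρ σ h₁ h₂ => by simp only [evalT] at h₁ h₂ ⊢; omega))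

end Derives

/-! ### The negative translation -/

theorem freeN_gTrans (A : Formula) : freeN (gTrans A) = freeN A := by
  induction A <;> simp_all [gTrans, freeN, neg]

theorem freeF_gTrans (A : Formula) : freeF (gTrans A) = freeF A := by
  induction A <;> simp_all [gTrans, freeF, neg]

theorem gTrans_subN (n : ℕ) (u : Term) (A : Formula) :
    gTrans (subN n u A) = subN n u (gTrans A) := by
  induction A <;> simp_all [gTrans, subN, neg] <;> split_ifs <;> simp_all [gTrans, neg]

theorem gTrans_subF (a : ℕ) (ψ : Func) (A : Formula) :
    gTrans (subF a ψ A) = subF a ψ (gTrans A) := by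
  induction A <;> simp_all [gTrans, subF, neg] <;> split_ifs <;> simp_all [gTrans, neg]

theorem FreeForN.gTrans {u : Term} {n : ℕ} {A : Formula} (h : FreeForN u n A) :
    FreeForN u n (gTrans A) := by
  induction A <;> simp_all [NegInterp.gTrans, FreeForN, neg, freeN, freeN_gTrans] <;> tauto

theorem FreeForF.gTrans {ψ : Func} {a : ℕ} {A : Formula} (h : FreeForF ψ a A) :
    FreeForF ψ a (gTrans A) := by
  induction A <;> simp_all [NegInterp.gTrans, FreeForF, neg, freeF, freeF_gTrans] <;> tauto

theorem gTrans_mem_IA1 {A : Formula} (h : A ∈ IA1) : gTrans A ∈ IA1 := by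
  rcases h with (((⟨s, t, rfl, hv⟩ | ⟨n, s, t, B, hs, ht, rfl⟩) | ⟨s, t, rfl⟩ | ⟨t, rfl⟩) |
    ⟨x, B, rfl⟩) | ⟨x, t, s, hf, rfl⟩
  · exact Or.inl (Or.inl (Or.inl (Or.inl ⟨s, t, rfl, hv⟩)))
  · refine Or.inl (Or.inl (Or.inl (Or.inr ⟨n, s, t, gTrans B, hs.gTrans, ht.gTrans, ?_⟩)))
    simp [gTrans, gTrans_subN]
  · exact Or.inl (Or.inl (Or.inr (Or.inl ⟨s, t, rfl⟩)))
  · exact Or.inl (Or.inl (Or.inr (Or.inr ⟨t, rfl⟩)))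
  · exact Or.inl (Or.inr ⟨x, gTrans B, by simp [gTrans, gTrans_subN]⟩)
  · exact Or.inr ⟨x, t, s, hf, rfl⟩

def Stable (T : Set Formula) (A : Formula) : Prop := Prov T ((nneg A).imp A)

section Stable

variable {T : Set Formula} {A B : Formula}

theorem stable_falsum : Stable T falsum :=
  Derives.mp (Γ := [_]) Derives.self (Derives.of_prov Prov.imp_self)

theorem stable_neg : Stable T (neg A) := Derives.neg_of_nneg_neg (Γ := [_]) Derives.self

theorem stable_eq (hT : IA1 ⊆ T) {s t : Term} : Stable T (.eq s t) :=
  Derives.eq_of_nneg (Γ := [_]) hT Derives.self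

theorem Stable.and (hA : Stable T A) (hB : Stable T B) : Stable T (A.and B) :=
  Derives.andI (Γ := [_])
    (Derives.mp (Derives.of_prov hA) (Derives.nneg_mono Prov.andE1 Derives.self))
    (Derives.mp (Derives.of_prov hB) (Derives.nneg_mono Prov.andE2 Derives.self))

theorem Stable.imp (hB : Stable T B) : Stable T (A.imp B) :=
  Derives.intro (Γ := [_]) (Derives.mp (Derives.of_prov hB)
    (Derives.nneg_of_nneg_imp Derives.self.weaken Derives.last))

theorem Stable.allN {n : ℕ} (hA : Stable T A) : Stable T (allN n A) :=
  Derives.genN (Γ := [_]) (by simp [nneg, neg, freeN])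
    (Derives.mp (Derives.of_prov hA) (Derives.nneg_mono Prov.allNE_self Derives.self))

theorem Stable.allF {a : ℕ} (hA : Stable T A) : Stable T (allF a A) :=
  Derives.genF (Γ := [_]) (by simp [nneg, neg, freeF])
    (Derives.mp (Derives.of_prov hA) (Derives.nneg_mono Prov.allFE_self Derives.self))

theorem Stable.by_contra {Γ : List Formula} (hA : Stable T A)
    (h : Derives T (Γ ++ [neg A]) falsum) : Derives T Γ A :=
  Derives.mp (Derives.of_prov hA) (Derives.intro h)

theorem stable_gTrans (hT : IA1 ⊆ T) : ∀ A : Formula, Stable T (gTrans A)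
  | .eq _ _ => stable_eq hT
  | .falsum => stable_falsum
  | .and A B => (stable_gTrans hT A).and (stable_gTrans hT B)
  | .imp _ B => (stable_gTrans hT B).imp
  | .allN _ A => (stable_gTrans hT A).allN
  | .allF _ A => (stable_gTrans hT A).allF
  | .or _ _ | .exN _ _ | .exF _ _ => stable_neg

end Stable

namespace Prov

variable {T : Set Formula} {A B C : Formula}

theorem imp_neg_and_neg_left : Prov T (A.imp (neg ((neg A).and (neg B)))) :=
  Derives.mp (Γ := [A, _]) (Derives.hyp (A := (neg A).and (neg B)) (by simp)).andE1
    (Derives.hyp (by simp))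

theorem imp_neg_and_neg_right : Prov T (B.imp (neg ((neg A).and (neg B)))) :=
  Derives.mp (Γ := [B, _]) (Derives.hyp (A := (neg A).and (neg B)) (by simp)).andE2
    (Derives.hyp (by simp))

theorem subN_imp_neg_allN_neg {n : ℕ} {u : Term} (h : FreeForN u n A) :
    Prov T ((subN n u A).imp (neg (allN n (neg A)))) :=
  Derives.mp (Γ := [_, _])
    ((Derives.hyp (A := allN n (neg A)) (by simp)).allNE (u := u) (A := neg A) ⟨h, trivial⟩)
    (Derives.hyp (by simp))

theorem subF_imp_neg_allF_neg {a : ℕ} {ψ : Func} (h : FreeForF ψ a A) :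
    Prov T ((subF a ψ A).imp (neg (allF a (neg A)))) :=
  Derives.mp (Γ := [_, _])
    ((Derives.hyp (A := allF a (neg A)) (by simp)).allFE (ψ := ψ) (A := neg A) ⟨h, trivial⟩)
    (Derives.hyp (by simp))

theorem exN_imp_neg_allN_neg {n : ℕ} : Prov T ((exN n A).imp (neg (allN n (neg A)))) :=
  exNE (by simp [neg, freeN])
    (by simpa [subN_var_self] using subN_imp_neg_allN_neg (T := T) (FreeForN_var_self n A))

theorem neg_allN_neg_imp_nneg_exN {n : ℕ} :
    Prov T ((neg (allN n (neg A))).imp (nneg (exN n A))) :=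
  Derives.intro (Γ := [_]) (Derives.mp (Derives.hyp (A := neg (allN n (neg A))) (by simp))
    (Derives.genN (by simp [neg, freeN]) (Derives.intro (Derives.mp
      (Derives.hyp (A := neg (exN n A)) (by simp)) (Derives.exNI_self Derives.last)))))

theorem nneg_exN_imp_neg_allN_neg {n : ℕ} :
    Prov T ((nneg (exN n A)).imp (neg (allN n (neg A)))) :=
  Derives.mp (Γ := [_, _]) (Derives.hyp (A := nneg (exN n A)) (by simp)) (Derives.intro
    (Derives.mp (Derives.mp (Derives.of_prov exN_imp_neg_allN_neg) Derives.last)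
      (Derives.hyp (A := allN n (neg A)) (by simp))))

end Prov

namespace Stable

variable {T : Set Formula} {A B C : Formula}

theorem neg_and_neg_elim (hC : Stable T C) :
    Prov T ((A.imp C).imp ((B.imp C).imp ((neg ((neg A).and (neg B))).imp C))) := by
  show Derives T [A.imp C, B.imp C, neg ((neg A).and (neg B))] C
  refine hC.by_contra (Derives.mp (Derives.hyp (A := neg ((neg A).and (neg B))) (by simp))
    (Derives.andI ?_ ?_)) <;>
  exact Derives.intro (Derives.mp (Derives.hyp (A := neg C) (by simp))
    (Derives.mp (Derives.hyp (by simp)) Derives.last))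

theorem neg_allN_neg_imp {n : ℕ} (hB : Stable T B) (hn : n ∉ freeN B) (h : Prov T (A.imp B)) :
    Prov T ((neg (Formula.allN n (neg A))).imp B) :=
  hB.by_contra (Γ := [_]) (Derives.mp (Derives.hyp (A := neg (Formula.allN n (neg A))) (by simp))
    (Derives.genN (n := n) (by simp [neg, freeN, hn]) (Derives.intro
      (Derives.mp (Derives.hyp (A := neg B) (by simp))
        (Derives.mp (Derives.of_prov h) Derives.last)))))

theorem neg_allF_neg_imp {a : ℕ} (hB : Stable T B) (ha : a ∉ freeF B) (h : Prov T (A.imp B)) :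
    Prov T ((neg (Formula.allF a (neg A))).imp B) :=
  hB.by_contra (Γ := [_]) (Derives.mp (Derives.hyp (A := neg (Formula.allF a (neg A))) (by simp))
    (Derives.genF (a := a) (by simp [neg, freeF, ha]) (Derives.intro
      (Derives.mp (Derives.hyp (A := neg B) (by simp))
        (Derives.mp (Derives.of_prov h) Derives.last)))))

end Stable

theorem Prov.gTrans_of_union_DNE {T S : Set Formula} (hT : IA1 ⊆ T)
    (hS : ∀ A ∈ S, Prov T (gTrans A)) {B : Formula} (h : Prov (S ∪ DNE) B) :
    Prov T (gTrans B) := by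
  induction h with
  | ax h =>
    rcases h with h | ⟨A, rfl⟩
    exacts [hS _ h, stable_gTrans hT A]
  | mp _ _ ih₁ ih₂ => exact mp ih₁ ih₂
  | orI1 => exact imp_neg_and_neg_left
  | orI2 => exact imp_neg_and_neg_right
  | @orE _ _ C => exact (stable_gTrans hT C).neg_and_neg_elim
  | @allNE n A u h =>
    rw [gTrans, gTrans_subN]
    exact allNE h.gTrans
  | @exNI n A u h =>
    rw [gTrans, gTrans_subN]
    exact subN_imp_neg_allN_neg h.gTrans
  | @allFE a A ψ h =>
    rw [gTrans, gTrans_subF]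
    exact allFE h.gTrans
  | @exFI a A ψ h =>
    rw [gTrans, gTrans_subF]
    exact subF_imp_neg_allF_neg h.gTrans
  | allNI h _ ih => exact allNI (by rwa [freeN_gTrans]) ih
  | allFI h _ ih => exact allFI (by rwa [freeF_gTrans]) ih
  | @exNE _ _ B h _ ih => exact (stable_gTrans hT B).neg_allN_neg_imp (by rwa [freeN_gTrans]) ih
  | @exFE _ _ B h _ ih => exact (stable_gTrans hT B).neg_allF_neg_imp (by rwa [freeF_gTrans]) ih
  | genN _ ih => exact genN ih
  | genF _ ih => exact genF ih
  | k => exact k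
  | s => exact s
  | andI => exact andI
  | andE1 => exact andE1
  | andE2 => exact andE2
  | exfalso => exact exfalso

/-! ### The fan theorem and GDK -/

/-- `ρ(ᾱ(x)) = 0`, where `ρ` and `α` are the function variables `0` and `1`. -/
def barZero (x : Term) : Formula := .eq (.app (.fvar 0) (.bar (.fvar 1) x)) .zero

/-- `x ≤ n & ρ(ᾱ(x)) = 0`, where `x` and `n` are the number variables `0` and `2`. -/
def barZeroLe : Formula := (tle (.var 0) (.var 2)).and (barZero (.var 0))

def barred : Formula := allF 1 ((binF 1 1).imp (exN 0 (barZero (.var 0))))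

def nnBarred : Formula := allF 1 ((binF 1 1).imp (nneg (exN 0 (barZero (.var 0)))))

def uniformlyBarred : Formula := exN 2 (allF 1 ((binF 1 1).imp (exN 0 barZeroLe)))

theorem FT1_eq : FT1 = allF 0 (barred.imp uniformlyBarred) := rfl

theorem GDK_eq : GDK = allF 0 (nnBarred.imp (nneg barred)) := rfl

def barSearch (n : Term) : Formula :=
  (exN 0 ((tlt (.var 0) n).and (barZero (.var 0)))).or
    (allN 0 ((tlt (.var 0) n).imp (neg (barZero (.var 0)))))

theorem subN_barSearch (u : Term) : subN 2 u (barSearch (.var 2)) = barSearch u := rfl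

theorem Derives.barZero_congr {T : Set Formula} {Γ : List Formula} (hT : IA1 ⊆ T) {s t : Term}
    (heq : Derives T Γ (.eq s t)) (h : Derives T Γ (barZero s)) : Derives T Γ (barZero t) :=
  eq_of_valid_imp₂ hT heq h fun _ _ h₁ h₂ => by simpa [evalT, h₁] using h₂

namespace Prov

variable {T : Set Formula}

theorem barSearch_zero (hT : IA1 ⊆ T) : Prov T (barSearch .zero) :=
  Derives.orI2 (Derives.genN (Γ := []) (by simp) (Derives.intro (Derives.exfalso
    (Derives.false_of_eq hT Derives.last fun ρ σ => by simp [evalT]))))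

theorem barSearch_succ (hT : IA1 ⊆ T) :
    Prov T ((barSearch (.var 2)).imp (barSearch (.succ (.var 2)))) := by
  set n : Term := .var 2
  set R := allN 0 ((tlt (.var 0) n).imp (neg (barZero (.var 0))))
  have fresh : 0 ∉ freeN (barSearch n) := by simp [barSearch, n, freeN]
  show Derives T [barSearch n] (barSearch (.succ n))
  refine Derives.orE Derives.self ?_ ?_
  · have hlt : Derives T [barSearch n, exN 0 ((tlt (.var 0) n).and (barZero (.var 0))),
        (tlt (.var 0) n).and (barZero (.var 0))] (tlt (.var 0) (.succ n)) :=
      Derives.eq_of_valid_imp hT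
        (Derives.hyp (A := (tlt (.var 0) n).and (barZero (.var 0))) (by simp)).andE1 fun _ _ h => by
        simp only [evalT] at h ⊢
        omega
    exact Derives.exNE (by simp [barSearch, freeN]) (by simp [fresh, freeN])
      Derives.last (Derives.orI1 (Derives.exNI_self (Derives.andI hlt Derives.last.andE2)))
  refine Derives.orE (Derives.eq_zero_or_neg hT (.app (.fvar 0) (.bar (.fvar 1) n))) ?_ ?_
  · refine Derives.orI1 (Derives.exNI (u := n)
      (by simp [n, tlt, tle, barZero, FreeForN, tFForN, fFForN]) ?_)
    show Derives T _ ((tlt n (.succ n)).and (barZero n))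
    exact Derives.andI (Derives.eq_of_valid hT fun _ _ => by simp [evalT]) Derives.last
  refine Derives.orI2 (Derives.genN (by simp [fresh, n, barZero, neg, freeN, tFN, fFN])
    (Derives.intro ?_))
  refine Derives.orE (Derives.le_or_eq_succ_of_le_succ hT Derives.last)
    (Derives.mp (Derives.specN (Derives.hyp (A := R) (by simp [R]))) Derives.last)
    (Derives.intro (Derives.mp (Derives.hyp (A := neg (barZero n)) (by simp [n, barZero])) ?_))
  refine Derives.barZero_congr hT (Derives.eq_of_valid_imp hT Derives.last.weaken ?_)
    Derives.last
  simp [evalT]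

theorem allN_barSearch (hT : IA1 ⊆ T) : Prov T (allN 2 (barSearch (.var 2))) :=
  induction hT (barSearch_zero hT) (genN (barSearch_succ hT))

/-- A bounded search for the decidable `ρ(ᾱ(x)) = 0` gives bounded Markov's principle. -/
theorem exN_barZeroLe_of_neg_allN_neg (hT : IA1 ⊆ T) :
    Prov T ((neg (allN 0 (neg barZeroLe))).imp (exN 0 barZeroLe)) := by
  have search : Derives T [neg (allN 0 (neg barZeroLe))] (barSearch (.succ (.var 2))) := by
    rw [← subN_barSearch]
    exact (Derives.of_prov (allN_barSearch hT)).allNE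
      (by simp [barSearch, tlt, tle, barZero, neg, FreeForN, tFForN, fFForN, tFN])
  have lt_succ_iff_le {Γ : List Formula} {x n : Term} :
      Derives T Γ (tle x n) ↔ Derives T Γ (tlt x (.succ n)) := by
    constructor <;> exact fun h => Derives.eq_of_valid_imp hT h fun _ _ h => by
      simp only [evalT] at h ⊢
      omega
  refine Derives.orE search (Derives.mp (Derives.of_prov (exN_mono ?_)) Derives.last) ?_
  · exact Derives.andI (lt_succ_iff_le.2 Derives.self.andE1) Derives.self.andE2
  set R := allN 0 ((tlt (.var 0) (.succ (.var 2))).imp (neg (barZero (.var 0))))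
  refine Derives.exfalso (Derives.mp (Derives.hyp (A := neg (allN 0 (neg barZeroLe))) (by simp))
    (Derives.genN (by simp [R, barZeroLe, tlt, tle, barZero, neg, freeN, tFN, fFN])
      (Derives.intro ?_)))
  have h : Derives T ([neg (allN 0 (neg barZeroLe))] ++ [R] ++ [barZeroLe]) barZeroLe :=
    Derives.last
  exact Derives.mp (Derives.mp (Derives.specN (Derives.hyp (A := R) (by simp)))
    (lt_succ_iff_le.1 h.andE1)) h.andE2

end Prov

theorem Prov.gTrans_FT1 : Prov (IA1 ∪ {FT1, GDK}) (gTrans FT1) := by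
  set T := IA1 ∪ {FT1, GDK}
  have hFT1 : Prov T (barred.imp uniformlyBarred) :=
    mp allFE_self (ax (Or.inr (Or.inl FT1_eq.symm)))
  have hGDK : Prov T (nnBarred.imp (nneg barred)) :=
    mp allFE_self (ax (Or.inr (Or.inr GDK_eq.symm)))
  have hNNBarred : Prov T ((gTrans barred).imp nnBarred) :=
    allF_mono (imp_imp_imp neg_allN_neg_imp_nneg_exN)
  have hUniform : Prov T (uniformlyBarred.imp (gTrans uniformlyBarred)) :=
    imp_trans (exN_mono (allF_mono (imp_imp_imp exN_imp_neg_allN_neg))) exN_imp_neg_allN_neg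
  have h : Derives T [gTrans barred] (nneg (gTrans uniformlyBarred)) :=
    Derives.nneg_mono (imp_trans hFT1 hUniform)
      (Derives.mp (Derives.of_prov (imp_trans hNNBarred hGDK)) Derives.self)
  rw [FT1_eq]
  exact genF (Derives.mp (Derives.of_prov (stable_gTrans Set.subset_union_left _)) h)

theorem Prov.GDK_of_gTrans_FT1 : Prov (IA1 ∪ {gTrans FT1}) GDK := by
  set T := IA1 ∪ {gTrans FT1}
  have hFT1 : Prov T ((gTrans barred).imp (gTrans uniformlyBarred)) :=
    mp allFE_self (ax (Or.inr (congrArg gTrans FT1_eq).symm))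
  have hNNBarred : Prov T (nnBarred.imp (gTrans barred)) :=
    allF_mono (imp_imp_imp nneg_exN_imp_neg_allN_neg)
  have hBarred : Prov T ((allF 1 ((binF 1 1).imp (neg (allN 0 (neg barZeroLe))))).imp barred) :=
    allF_mono (imp_imp_imp (imp_trans (exN_barZeroLe_of_neg_allN_neg Set.subset_union_left)
      (exN_mono andE2)))
  have h : Derives T [nnBarred] (gTrans uniformlyBarred) :=
    Derives.mp (Derives.of_prov (imp_trans hNNBarred hFT1)) Derives.self
  rw [GDK_eq]
  refine genF (Derives.intro (Derives.mp h.weaken (Derives.genN ?_ (Derives.intro ?_))))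
  · simp [nnBarred, barred, binF, barZero, tle, nneg, neg, freeN, tFN, fFN]
  · exact Derives.mp (Derives.hyp (A := neg barred) (by simp))
      (Derives.mp (Derives.of_prov hBarred) Derives.last)

/-- (IA₁ + FT₁)^{+g} = IA₁ + FT₁ + GDK: IA₁ + FT₁ + GDK proves
the negative translation (FT₁)^g, and GDK is provable in IA₁ + (FT₁)^g. -/
theorem statement6 :
    SameTheory (minClassExt (IA1 ∪ {FT1})) (IA1 ∪ {FT1, GDK}) ∧
    Prov (IA1 ∪ {FT1, GDK}) (gTrans FT1) ∧
    Prov (IA1 ∪ {gTrans FT1}) GDK := by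
  refine ⟨fun A => ⟨Prov.of_prov_axioms ?_, Prov.of_prov_axioms ?_⟩, Prov.gTrans_FT1,
    Prov.GDK_of_gTrans_FT1⟩
  · rintro B ((hB | rfl) | ⟨C, hC, rfl⟩)
    · exact Prov.ax (Or.inl hB)
    · exact Prov.ax (Or.inr (Or.inl rfl))
    · refine Prov.gTrans_of_union_DNE Set.subset_union_left ?_ hC
      rintro D (hD | rfl)
      exacts [Prov.ax (Or.inl (gTrans_mem_IA1 hD)), Prov.gTrans_FT1]
  · rintro B (hB | rfl | rfl)
    · exact Prov.ax (Or.inl (Or.inl hB))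
    · exact Prov.ax (Or.inl (Or.inr rfl))
    · refine Prov.of_prov_axioms ?_ Prov.GDK_of_gTrans_FT1
      rintro D (hD | rfl)
      exacts [Prov.ax (Or.inl (Or.inl hD)),
        Prov.ax (Or.inr ⟨FT1, Prov.ax (Or.inl (Or.inr rfl)), rfl⟩)]

end NegInterp
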